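/- Let X be a proper complete CAT(0) space, let c be a geodesic ray starting at o with the bounded geodesic image property, and let h be a horofunction associated to c (i.e., h = b_c + K for a constant K). If (x_k) is a sequence in X with h(x_k) → −∞, then x_k converges to c(∞) in the visual topology on X ∪ ∂X; in particular, every sequence of h-horospheres is convergent to c(∞). -/

import Mathlib

open Metric Set Filter

variable {X : Type*} [MetricSpace X]

/-- A unit-speed geodesic ray, defined on `[0,∞)`. -/
def IsGeodesicRay (c : ℝ → X) : Prop :=
  ∀ s t : ℝ, 0 ≤ s → 0 ≤ t → dist (c s) (c t) = |s - t|

/-- The image of a geodesic ray, i.e. `c([0,∞))`. -/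
def rayImage (c : ℝ → X) : Set X := c '' Set.Ici (0 : ℝ)

/-- A geodesic segment from `x` to `y`, parametrized proportionally to arc length on `[0,1]`. -/
def IsGeodesicSegment (γ : ℝ → X) (x y : X) : Prop :=
  γ 0 = x ∧ γ 1 = y ∧
  ∀ s ∈ Set.Icc (0:ℝ) 1, ∀ t ∈ Set.Icc (0:ℝ) 1,
    dist (γ s) (γ t) = |s - t| * dist x y

/-- A geodesic metric space: any two points are joined by a geodesic segment. -/
def GeodesicSpace (X : Type*) [MetricSpace X] : Prop :=
  ∀ x y : X, ∃ γ : ℝ → X, IsGeodesicSegment γ x y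

/-- CAT(0): a geodesic space satisfying the (CN-type) comparison inequality
`d(z,γ(t))² ≤ (1-t)d(z,x)² + t d(z,y)² - t(1-t)d(x,y)²` along all geodesics,
which is equivalent to the Euclidean comparison-triangle definition. -/
def CAT0Space (X : Type*) [MetricSpace X] : Prop :=
  GeodesicSpace X ∧
  ∀ (γ : ℝ → X) (x y : X), IsGeodesicSegment γ x y →
    ∀ z : X, ∀ t ∈ Set.Icc (0:ℝ) 1,
      dist z (γ t) ^ 2 ≤
        (1 - t) * dist z x ^ 2 + t * dist z y ^ 2 - t * (1 - t) * dist x y ^ 2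

/-- Convex subset: contains every geodesic segment between two of its points. -/
def ConvexSubset (C : Set X) : Prop :=
  ∀ x ∈ C, ∀ y ∈ C, ∀ γ : ℝ → X, IsGeodesicSegment γ x y →
    ∀ t ∈ Set.Icc (0:ℝ) 1, γ t ∈ C

/-- The Busemann function of a ray `c`:
`b_c(x) = lim_{t→∞} [d(x,c(t)) - t]`, realized as the infimum of the
non-increasing quantity `d(x,c(t)) - t` over `t ≥ 0`. -/
noncomputable def busemann (c : ℝ → X) (x : X) : ℝ :=
  ⨅ t : Set.Ici (0:ℝ), (dist x (c (t : ℝ)) - (t : ℝ))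

/-- `proj` is a nearest-point projection onto the set `A`. -/
def IsProjOnto (proj : X → X) (A : Set X) : Prop :=
  ∀ x : X, proj x ∈ A ∧ ∀ y ∈ A, dist x (proj x) ≤ dist x y

/-- A sublinear function `κ : [0,∞) → [1,∞)` with `κ(t)/t → 0`. -/
def Sublinear (κ : ℝ → ℝ) : Prop :=
  (∀ t : ℝ, 0 ≤ t → 1 ≤ κ t) ∧
  Tendsto (fun t => κ t / t) atTop (nhds 0)

/-- `c` is `κ`-contracting (w.r.t. the nearest-point projection `proj` onto `c`,
basepoint `o`): every ball disjoint from `c` projects to a set of diameter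
at most `n·κ(‖center‖)`. -/
def KappaContracting (o : X) (c : ℝ → X) (proj : X → X) (κ : ℝ → ℝ) : Prop :=
  ∃ n : ℝ, 0 ≤ n ∧ ∀ (x : X) (r : ℝ), 0 < r →
    Metric.closedBall x r ∩ rayImage c = ∅ →
    Metric.diam (proj '' Metric.closedBall x r) ≤ n * κ (dist o x)

/-- Bounded geodesic image property of the ray `c` (w.r.t. projection `proj`):
for every geodesic ray `c'` with the same start point there is `n ≥ 0` such that
every ball centered on `c'` and disjoint from `c` projects to a set of diameter ≤ `n`. -/
def BGIP (c : ℝ → X) (proj : X → X) : Prop :=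
  ∀ c' : ℝ → X, IsGeodesicRay c' → c' 0 = c 0 →
    ∃ n : ℝ, 0 ≤ n ∧ ∀ (s r : ℝ), 0 ≤ s →
      Metric.closedBall (c' s) r ∩ rayImage c = ∅ →
      Metric.diam (proj '' Metric.closedBall (c' s) r) ≤ n

/-- Two rays are asymptotic (define the same boundary point). -/
def Asymptotic (c c' : ℝ → X) : Prop :=
  ∃ M : ℝ, ∀ t : ℝ, 0 ≤ t → dist (c t) (c' t) ≤ M

/-- `h` is convex along geodesics. -/
def ConvexAlongGeodesics (h : X → ℝ) : Prop :=
  ∀ (γ : ℝ → X) (x y : X), IsGeodesicSegment γ x y →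
    ∀ s ∈ Set.Icc (0:ℝ) 1, h (γ s) ≤ (1 - s) * h x + s * h y

open Topology

section cat0aux

lemma geodesic_reverse {γ : ℝ → X} {x y : X} (h : IsGeodesicSegment γ x y) :
    IsGeodesicSegment (fun u => γ (1 - u)) y x := by
  obtain ⟨h0, h1, hd⟩ := h
  refine ⟨by simpa using h1, by simpa using h0, ?_⟩
  intro s hs t ht
  have := hd (1 - s) ⟨by linarith [hs.2], by linarith [hs.1]⟩
    (1 - t) ⟨by linarith [ht.2], by linarith [ht.1]⟩
  simpa [dist_comm x y, abs_sub_comm s t] using this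

lemma dist_convex (hX : CAT0Space X) {γ : ℝ → X} {x y : X}
    (hγ : IsGeodesicSegment γ x y) (z : X) {t : ℝ} (ht : t ∈ Set.Icc (0:ℝ) 1) :
    dist z (γ t) ≤ (1 - t) * dist z x + t * dist z y := by
  obtain ⟨ht0, ht1⟩ := ht
  have hCN := hX.2 γ x y hγ z t ⟨ht0, ht1⟩
  have h1 : |dist x z - dist y z| ≤ dist x y := abs_dist_sub_le x y z
  have h1' : (dist z x - dist z y)^2 ≤ dist x y ^ 2 := by
    rw [dist_comm z x, dist_comm z y]
    exact sq_le_sq' (by linarith [abs_le.mp h1]) (by linarith [abs_le.mp h1])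
  have hR : 0 ≤ (1 - t) * dist z x + t * dist z y :=
    add_nonneg (mul_nonneg (by linarith) dist_nonneg) (mul_nonneg ht0 dist_nonneg)
  have hkey : dist z (γ t) ^ 2 ≤ ((1 - t) * dist z x + t * dist z y) ^ 2 := by
    nlinarith [mul_nonneg (mul_nonneg ht0 (by linarith : (0:ℝ) ≤ 1 - t))
      (sub_nonneg.mpr h1')]
  nlinarith [dist_nonneg (x := z) (y := γ t)]

end cat0aux

section cat0aux2

/-- Comparison for two geodesics with a common start point. -/
lemma common_start (hX : CAT0Space X) {γ m : ℝ → X} {x a b : X}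
    (hγ : IsGeodesicSegment γ x a) (hm : IsGeodesicSegment m x b)
    {u : ℝ} (hu : u ∈ Set.Icc (0:ℝ) 1) :
    dist (γ u) (m u) ≤ u * dist a b := by
  obtain ⟨hu0, hu1⟩ := hu
  have h1 := hX.2 γ x a hγ (m u) u ⟨hu0, hu1⟩
  have h2 := hX.2 m x b hm a u ⟨hu0, hu1⟩
  have hmu : dist (m u) x = u * dist x b := by
    have := hm.2.2 u ⟨hu0, hu1⟩ 0 ⟨le_refl _, zero_le_one⟩
    rw [hm.1] at this
    simpa [abs_of_nonneg hu0] using this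
  have hkey : dist (γ u) (m u) ^ 2 ≤ (u * dist a b) ^ 2 := by
    rw [dist_comm (γ u) (m u)]
    rw [hmu] at h1
    rw [dist_comm a (m u), dist_comm a x] at h2
    nlinarith [mul_le_mul_of_nonneg_left h2 hu0]
  have hR : 0 ≤ u * dist a b := mul_nonneg hu0 dist_nonneg
  nlinarith [dist_nonneg (x := γ u) (y := m u)]

/-- Convexity of the distance between two geodesics (same parameter). -/
lemma geodesics_convex (hX : CAT0Space X) {γ σ : ℝ → X} {x y z w : X}
    (hγ : IsGeodesicSegment γ x y) (hσ : IsGeodesicSegment σ z w)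
    {u : ℝ} (hu : u ∈ Set.Icc (0:ℝ) 1) :
    dist (γ u) (σ u) ≤ (1 - u) * dist x z + u * dist y w := by
  obtain ⟨m, hm⟩ := hX.1 x w
  have h1 : dist (γ u) (m u) ≤ u * dist y w := common_start hX hγ hm hu
  have h2 : dist (m u) (σ u) ≤ (1 - u) * dist x z := by
    have hrev := common_start hX (geodesic_reverse hm) (geodesic_reverse hσ)
      (u := 1 - u) ⟨by linarith [hu.2], by linarith [hu.1]⟩
    simp only [sub_sub_cancel] at hrev
    exact hrev
  calc dist (γ u) (σ u) ≤ dist (γ u) (m u) + dist (m u) (σ u) := dist_triangle _ _ _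
    _ ≤ u * dist y w + (1 - u) * dist x z := add_le_add h1 h2
    _ = (1 - u) * dist x z + u * dist y w := by ring

/-- Reparametrization of a portion of a ray as a geodesic segment. -/
lemma ray_segment {c : ℝ → X} (hc : IsGeodesicRay c) {a b : ℝ} (ha : 0 ≤ a) (hb : 0 ≤ b) :
    IsGeodesicSegment (fun u => c (a + u * (b - a))) (c a) (c b) := by
  refine ⟨by simp, by simp, ?_⟩
  intro s hs t ht
  have hsa : 0 ≤ a + s * (b - a) := by nlinarith [hs.1, hs.2]
  have hta : 0 ≤ a + t * (b - a) := by nlinarith [ht.1, ht.2]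
  rw [hc _ _ hsa hta, hc a b ha hb]
  rw [show a + s * (b - a) - (a + t * (b - a)) = (s - t) * (-(a - b)) by ring, abs_mul, abs_neg]

/-- A constant map is a geodesic segment. -/
lemma const_segment (z : X) : IsGeodesicSegment (fun _ : ℝ => z) z z := by
  refine ⟨rfl, rfl, fun s _ t _ => by simp⟩

end cat0aux2

section busemannAux

variable {c : ℝ → X}

lemma busemann_term_ge (hc : IsGeodesicRay c) (x : X) {t : ℝ} (ht : 0 ≤ t) :
    -(dist x (c 0)) ≤ dist x (c t) - t := by
  have h := hc 0 t le_rfl ht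
  have : dist (c 0) (c t) ≤ dist (c 0) x + dist x (c t) := dist_triangle _ _ _
  rw [h] at this
  rw [abs_of_nonpos (by linarith)] at this
  rw [dist_comm (c 0) x] at this
  linarith

lemma busemann_bddBelow (hc : IsGeodesicRay c) (x : X) :
    BddBelow (Set.range fun t : Set.Ici (0:ℝ) => dist x (c (t : ℝ)) - (t : ℝ)) := by
  refine ⟨-(dist x (c 0)), ?_⟩
  rintro v ⟨⟨t, ht⟩, rfl⟩
  exact busemann_term_ge hc x ht

lemma busemann_le (hc : IsGeodesicRay c) (x : X) {t : ℝ} (ht : 0 ≤ t) :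
    busemann c x ≤ dist x (c t) - t :=
  ciInf_le (busemann_bddBelow hc x) (⟨t, ht⟩ : Set.Ici (0:ℝ))

lemma neg_dist_le_busemann (hc : IsGeodesicRay c) (x : X) :
    -(dist x (c 0)) ≤ busemann c x :=
  le_ciInf fun ⟨t, ht⟩ => busemann_term_ge hc x ht

lemma busemann_zero (hc : IsGeodesicRay c) : busemann c (c 0) = 0 := by
  refine le_antisymm ?_ ?_
  · have := busemann_le hc (c 0) (le_refl 0)
    simpa using this
  · refine le_ciInf fun ⟨t, ht⟩ => ?_
    have := hc 0 t le_rfl ht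
    have ht' : 0 ≤ t := ht
    simp only
    rw [this, abs_of_nonpos (by linarith)]
    linarith

lemma busemann_le_add (hc : IsGeodesicRay c) (x y : X) :
    busemann c x ≤ busemann c y + dist x y := by
  rw [← sub_le_iff_le_add]
  refine le_ciInf fun ⟨t, ht⟩ => ?_
  have h1 : busemann c x ≤ dist x (c t) - t := busemann_le hc x ht
  have h2 : dist x (c t) ≤ dist x y + dist y (c t) := dist_triangle _ _ _
  simp only
  linarith

lemma busemann_antitone (hc : IsGeodesicRay c) (x : X) {s t : ℝ} (hs : 0 ≤ s) (hst : s ≤ t) :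
    dist x (c t) - t ≤ dist x (c s) - s := by
  have h1 : dist x (c t) ≤ dist x (c s) + dist (c s) (c t) := dist_triangle _ _ _
  rw [hc s t hs (le_trans hs hst), abs_of_nonpos (by linarith)] at h1
  linarith

lemma busemann_exists_near (hc : IsGeodesicRay c) (x : X) {η : ℝ} (hη : 0 < η) :
    ∃ t : ℝ, 0 ≤ t ∧ dist x (c t) - t < busemann c x + η := by
  have : busemann c x < busemann c x + η := by linarith
  obtain ⟨⟨t, ht⟩, h⟩ := exists_lt_of_ciInf_lt this
  exact ⟨t, ht, h⟩

lemma busemann_convex (hX : CAT0Space X) (hc : IsGeodesicRay c)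
    {γ : ℝ → X} {p q : X} (hγ : IsGeodesicSegment γ p q) {u : ℝ} (hu : u ∈ Set.Icc (0:ℝ) 1) :
    busemann c (γ u) ≤ (1 - u) * busemann c p + u * busemann c q := by
  refine le_of_forall_pos_le_add fun η hη => ?_
  obtain ⟨t1, ht1, h1⟩ := busemann_exists_near hc p hη
  obtain ⟨t2, ht2, h2⟩ := busemann_exists_near hc q hη
  set t := max t1 t2 with htdef
  have ht : 0 ≤ t := le_trans ht1 (le_max_left _ _)
  have h1' : dist p (c t) - t ≤ dist p (c t1) - t1 := busemann_antitone hc p ht1 (le_max_left _ _)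
  have h2' : dist q (c t) - t ≤ dist q (c t2) - t2 := busemann_antitone hc q ht2 (le_max_right _ _)
  have hb : busemann c (γ u) ≤ dist (γ u) (c t) - t := busemann_le hc _ ht
  have hconv : dist (c t) (γ u) ≤ (1 - u) * dist (c t) p + u * dist (c t) q :=
    dist_convex hX hγ (c t) hu
  rw [dist_comm (c t) (γ u), dist_comm (c t) p, dist_comm (c t) q] at hconv
  have hu0 := hu.1
  have hu1 := hu.2
  nlinarith [mul_le_mul_of_nonneg_left (le_of_lt (lt_of_le_of_lt h1' h1)) (by linarith : (0:ℝ) ≤ 1 - u),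
    mul_le_mul_of_nonneg_left (le_of_lt (lt_of_le_of_lt h2' h2)) hu0]

end busemannAux

section projAux

lemma rayImage_mem {c : ℝ → X} {t : ℝ} (ht : 0 ≤ t) : c t ∈ rayImage c :=
  ⟨t, ht, rfl⟩

/-- The nearest-point projection does not increase distances to points of the ray. -/
lemma proj_dist_le (hX : CAT0Space X) {c : ℝ → X} (hc : IsGeodesicRay c)
    {proj : X → X} (hproj : IsProjOnto proj (rayImage c))
    (y : X) {w : X} (hw : w ∈ rayImage c) : dist (proj y) w ≤ dist y w := by
  obtain ⟨a, ha, hay⟩ := (hproj y).1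
  obtain ⟨b, hb, rfl⟩ := hw
  have ha' : (0:ℝ) ≤ a := ha
  have hb' : (0:ℝ) ≤ b := hb
  have hm := ray_segment hc ha' hb'
  set L := dist (c a) (c b) with hL
  set D := dist y (c b) with hD
  have hDL : ∀ u : ℝ, 0 < u → u ≤ 1 → (1 - u) * L ^ 2 ≤ D ^ 2 := by
    intro u hu0 hu1
    have hCN := hX.2 _ _ _ hm y u ⟨le_of_lt hu0, hu1⟩
    have hmem : c (a + u * (b - a)) ∈ rayImage c := rayImage_mem (by nlinarith)
    have hnear : dist y (c a) ≤ dist y (c (a + u * (b - a))) := by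
      rw [hay]
      exact (hproj y).2 _ hmem
    have hsq : dist y (c a) ^ 2 ≤ dist y (c (a + u * (b - a))) ^ 2 :=
      pow_le_pow_left₀ dist_nonneg hnear 2
    have h2 : u * ((1 - u) * L ^ 2) ≤ u * D ^ 2 := by nlinarith [sq_nonneg (dist y (c a))]
    exact le_of_mul_le_mul_left h2 hu0
  have hL2 : L ^ 2 ≤ D ^ 2 := by
    by_contra hcon
    push_neg at hcon
    have hLpos : 0 < L ^ 2 := lt_of_le_of_lt (sq_nonneg D) hcon
    have hu := hDL ((L ^ 2 - D ^ 2) / (2 * L ^ 2))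
      (div_pos (by nlinarith) (by positivity))
      (by rw [div_le_one (by positivity)]; nlinarith [sq_nonneg D])
    rw [sub_div] at hu
    have h1 : (1 - (L ^ 2 / (2 * L ^ 2) - D ^ 2 / (2 * L ^ 2))) * L ^ 2
        = (1/2) * L ^ 2 + (1/2) * D ^ 2 := by
      have hL2 : L ^ 2 ≠ 0 := hLpos.ne'
      have e1 : L ^ 2 / (2 * L ^ 2) = 1 / 2 := by
        rw [div_eq_div_iff (mul_ne_zero two_ne_zero hL2) two_ne_zero]; ring
      have e2 : D ^ 2 / (2 * L ^ 2) * L ^ 2 = 1 / 2 * D ^ 2 := by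
        rw [div_mul_eq_mul_div, div_eq_iff (mul_ne_zero two_ne_zero hL2)]; ring
      rw [e1, show (1 - (1 / 2 - D ^ 2 / (2 * L ^ 2))) * L ^ 2
        = 1 / 2 * L ^ 2 + D ^ 2 / (2 * L ^ 2) * L ^ 2 by ring, e2]
    rw [h1] at hu
    nlinarith
  have : L ≤ D := by
    nlinarith [dist_nonneg (x := c a) (y := c b), dist_nonneg (x := y) (y := c b)]
  rw [← hay]
  exact this

end projAux

section lemmaB

lemma rayEq_of_busemann_nonpos (hX : CAT0Space X) {o : X} {c : ℝ → X}
    (hc : IsGeodesicRay c) (hco : c 0 = o)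
    {proj : X → X} (hproj : IsProjOnto proj (rayImage c))
    {c' : ℝ → X} (hc' : IsGeodesicRay c') (hc'o : c' 0 = o)
    {n : ℝ} (hn : 0 ≤ n)
    (hball : ∀ s r : ℝ, 0 ≤ s → Metric.closedBall (c' s) r ∩ rayImage c = ∅ →
       Metric.diam (proj '' Metric.closedBall (c' s) r) ≤ n)
    (hbuse : ∀ s : ℝ, 0 ≤ s → busemann c (c' s) ≤ 0) :
    ∀ s : ℝ, 0 ≤ s → c' s = c s := by
  classical
  have hmemo : o ∈ rayImage c := ⟨0, Set.mem_Ici.mpr le_rfl, hco⟩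
  have hmem : ∀ s : ℝ, ∃ a, 0 ≤ a ∧ c a = proj (c' s) := by
    intro s
    obtain ⟨a, ha, hca⟩ := (hproj (c' s)).1
    exact ⟨a, ha, hca⟩
  choose p hp0 hpc using hmem
  set g : ℝ → ℝ := fun s => dist (c' s) (proj (c' s)) with hgdef
  have hgle : ∀ (s : ℝ), ∀ w ∈ rayImage c, g s ≤ dist (c' s) w :=
    fun s w hw => (hproj (c' s)).2 w hw
  have hgpc : ∀ s : ℝ, g s = dist (c' s) (c (p s)) := by
    intro s; rw [hpc s]
  have hgnn : ∀ s, 0 ≤ g s := fun s => dist_nonneg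
  have hgzero : g 0 = 0 := by
    have h1 : g 0 ≤ dist (c' 0) o := hgle 0 o hmemo
    rw [hc'o] at h1
    simp only [dist_self] at h1
    exact le_antisymm h1 (hgnn 0)
  have hdisj : ∀ s r : ℝ, r < g s → Metric.closedBall (c' s) r ∩ rayImage c = ∅ := by
    intro s r hr
    rw [Set.eq_empty_iff_forall_notMem]
    rintro z ⟨hz1, hz2⟩
    rw [Metric.mem_closedBall, dist_comm] at hz1
    exact absurd (le_trans (hgle s z hz2) hz1) (not_le.mpr hr)
  have hbdd : ∀ (x : X) (r : ℝ), Bornology.IsBounded (proj '' Metric.closedBall x r) := by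
    intro x r
    apply (Metric.isBounded_closedBall (x := o) (r := 2 * (dist x o + |r|))).subset
    rintro _ ⟨v, hv, rfl⟩
    rw [Metric.mem_closedBall] at hv ⊢
    have h1 : dist v (proj v) ≤ dist v o := (hproj v).2 o hmemo
    have h2 : dist (proj v) o ≤ dist (proj v) v + dist v o := dist_triangle _ _ _
    have h3 : dist v o ≤ dist v x + dist x o := dist_triangle _ _ _
    have h4 : r ≤ |r| := le_abs_self r
    rw [dist_comm (proj v) v] at h2
    linarith
  -- key lower bound on the Busemann function via the bounded-image property
  have hkey : ∀ s : ℝ, 0 ≤ s → 2 ≤ g s → g s - 1 - p s - n ≤ busemann c (c' s) := by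
    intro s hs hgs
    refine le_ciInf ?_
    rintro ⟨t, ht⟩
    have ht' : (0:ℝ) ≤ t := ht
    simp only
    set d := dist (c' s) (c t) with hd
    have hdg : g s ≤ d := hgle s (c t) (rayImage_mem ht')
    have hdpos : 0 < d := lt_of_lt_of_le (by linarith) hdg
    obtain ⟨σ, hσ⟩ := hX.1 (c' s) (c t)
    set r := g s - 1 with hrdef
    have hrd : r / d ∈ Set.Icc (0:ℝ) 1 :=
      ⟨div_nonneg (by linarith) hdpos.le, (div_le_one hdpos).2 (by linarith)⟩
    set z := σ (r / d) with hzdef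
    have hz1 : dist (c' s) z = r := by
      have h := hσ.2.2 0 ⟨le_rfl, zero_le_one⟩ (r / d) hrd
      rw [hσ.1] at h
      rw [hzdef, h, zero_sub, abs_neg, abs_of_nonneg hrd.1, ← hd, div_mul_cancel₀ _ hdpos.ne']
    have hz2 : dist z (c t) = d - r := by
      have h := hσ.2.2 (r / d) hrd 1 ⟨zero_le_one, le_rfl⟩
      rw [hσ.2.1] at h
      rw [hzdef, h, abs_of_nonpos (by linarith [hrd.2]), ← hd]
      field_simp
      ring
    have hzball : z ∈ Metric.closedBall (c' s) r := by
      rw [Metric.mem_closedBall, dist_comm]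
      exact le_of_eq hz1
    have hcball : c' s ∈ Metric.closedBall (c' s) r :=
      Metric.mem_closedBall_self (by linarith)
    have hdiam := hball s r hs (hdisj s r (by linarith))
    have hpp : dist (proj z) (proj (c' s)) ≤ n :=
      le_trans (Metric.dist_le_diam_of_mem (hbdd _ _)
        (Set.mem_image_of_mem _ hzball) (Set.mem_image_of_mem _ hcball)) hdiam
    have hpt : dist (proj z) (c t) ≤ dist z (c t) :=
      proj_dist_le hX hc hproj z (rayImage_mem ht')
    have h5 : dist (c (p s)) (c t) ≤ n + (d - r) := by
      calc dist (c (p s)) (c t) ≤ dist (c (p s)) (proj z) + dist (proj z) (c t) :=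
            dist_triangle _ _ _
        _ ≤ n + (d - r) := by
            rw [hpc s, dist_comm (proj (c' s)) (proj z)]
            exact add_le_add hpp (hz2 ▸ hpt)
    have h6 : t - p s ≤ dist (c (p s)) (c t) := by
      rw [hc (p s) t (hp0 s) ht']
      linarith [neg_abs_le (p s - t), le_abs_self (p s - t)]
    linarith
  have hgp : ∀ s, 0 ≤ s → 2 ≤ g s → g s ≤ p s + n + 1 := by
    intro s hs h2
    have := hkey s hs h2
    have := hbuse s hs
    linarith
  have hchain : ∀ s, 0 ≤ s → 2 ≤ g s → p (s + (g s - 1)) ≤ p s + n := by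
    intro s hs hgs
    set s' := s + (g s - 1) with hs'def
    have hds' : dist (c' s') (c' s) = g s - 1 := by
      rw [hc' s' s (by linarith) hs, hs'def]
      rw [show s + (g s - 1) - s = g s - 1 by ring, abs_of_nonneg (by linarith)]
    have h1 : c' s' ∈ Metric.closedBall (c' s) (g s - 1) := by
      rw [Metric.mem_closedBall]
      exact le_of_eq hds'
    have h2 : c' s ∈ Metric.closedBall (c' s) (g s - 1) :=
      Metric.mem_closedBall_self (by linarith)
    have hdiam := hball s (g s - 1) hs (hdisj s _ (by linarith))
    have h3 := Metric.dist_le_diam_of_mem (hbdd _ _)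
      (Set.mem_image_of_mem proj h1) (Set.mem_image_of_mem proj h2)
    have hd' : dist (c (p s')) (c (p s)) ≤ n := by
      rw [hpc, hpc]
      exact le_trans h3 hdiam
    rw [hc (p s') (p s) (hp0 _) (hp0 _)] at hd'
    linarith [le_abs_self (p s' - p s)]
  have hgconv : ∀ a b : ℝ, 0 ≤ a → 0 ≤ b → ∀ u, 0 ≤ u → u ≤ 1 →
      g (a + u * (b - a)) ≤ (1 - u) * g a + u * g b := by
    intro a b ha hb u hu0 hu1
    have hγ := ray_segment hc' ha hb
    have hσ := ray_segment hc (hp0 a) (hp0 b)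
    have hconv := geodesics_convex hX hγ hσ (u := u) ⟨hu0, hu1⟩
    have hmem' : c (p a + u * (p b - p a)) ∈ rayImage c :=
      rayImage_mem (by nlinarith [hp0 a, hp0 b])
    have h1 : g (a + u * (b - a)) ≤ dist (c' (a + u * (b - a))) (c (p a + u * (p b - p a))) :=
      hgle _ _ hmem'
    rw [← hgpc a, ← hgpc b] at hconv
    exact le_trans h1 hconv
  by_cases hbound : ∃ M, 0 ≤ M ∧ ∀ s, 0 ≤ s → g s ≤ M
  · -- bounded distance: c' is asymptotic to c, hence equal
    obtain ⟨M, hM0, hM⟩ := hbound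
    have hps : ∀ s, 0 ≤ s → dist (c' s) (c s) ≤ 2 * M := by
      intro s hs
      have h1 : dist (c' s) (c s) ≤ dist (c' s) (c (p s)) + dist (c (p s)) (c s) :=
        dist_triangle _ _ _
      have h2 : dist (c (p s)) (c s) = |p s - s| := hc _ _ (hp0 s) hs
      have hposs : dist (c 0) (c (p s)) = p s := by
        rw [hc 0 (p s) le_rfl (hp0 s), zero_sub, abs_neg, abs_of_nonneg (hp0 s)]
      have hposs' : dist (c' 0) (c' s) = s := by
        rw [hc' 0 s le_rfl hs, zero_sub, abs_neg, abs_of_nonneg hs]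
      have h3 : |p s - s| ≤ dist (c (p s)) (c' s) := by
        have e1 : dist o (c (p s)) = p s := by rw [← hco]; exact hposs
        have e2 : dist o (c' s) = s := by rw [← hc'o]; exact hposs'
        have h4 : |dist (c (p s)) o - dist (c' s) o| ≤ dist (c (p s)) (c' s) :=
          abs_dist_sub_le _ _ _
        rw [dist_comm (c (p s)) o, dist_comm (c' s) o, e1, e2] at h4
        exact h4
      rw [dist_comm (c (p s)) (c' s), ← hgpc s] at h3
      have h5 := hM s hs
      rw [← hgpc s] at h1
      linarith
    intro s hs
    have hzero : dist (c' s) (c s) ≤ 0 := by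
      refine le_of_forall_pos_le_add fun ε hε => ?_
      set S := max s (2 * M * s / ε) + 1 with hSdef
      have hmax1 : s ≤ max s (2 * M * s / ε) := le_max_left _ _
      have hmax2 : 2 * M * s / ε ≤ max s (2 * M * s / ε) := le_max_right _ _
      have hS1 : s ≤ S := by rw [hSdef]; linarith
      have hSpos : 0 < S := by rw [hSdef]; linarith
      have hS2 : 2 * M * s / ε ≤ S := by rw [hSdef]; linarith
      have hseg1 : IsGeodesicSegment (fun u => c' (u * S)) o (c' S) := by
        have h := ray_segment hc' (le_refl 0) hSpos.le
        have heq : (fun u : ℝ => c' (0 + u * (S - 0))) = fun u : ℝ => c' (u * S) := by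
          funext u; ring_nf
        rw [heq] at h
        rwa [hc'o] at h
      have hseg2 : IsGeodesicSegment (fun u => c (u * S)) o (c S) := by
        have h := ray_segment hc (le_refl 0) hSpos.le
        have heq : (fun u : ℝ => c (0 + u * (S - 0))) = fun u : ℝ => c (u * S) := by
          funext u; ring_nf
        rw [heq] at h
        rwa [hco] at h
      have hcs := common_start hX hseg1 hseg2
        (u := s / S) ⟨div_nonneg hs hSpos.le, (div_le_one hSpos).2 hS1⟩
      rw [div_mul_cancel₀ _ hSpos.ne'] at hcs
      have h7 : dist (c' S) (c S) ≤ 2 * M := hps S hSpos.le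
      have h8 : s / S * dist (c' S) (c S) ≤ s / S * (2 * M) :=
        mul_le_mul_of_nonneg_left h7 (div_nonneg hs hSpos.le)
      have h9 : s / S * (2 * M) ≤ ε := by
        rw [div_mul_eq_mul_div, div_le_iff₀ hSpos]
        have h10 := (div_le_iff₀ hε).mp hS2
        linarith
      linarith
    rw [← dist_eq_zero]
    exact le_antisymm hzero dist_nonneg
  · -- unbounded: contradiction with the bounded-image property
    exfalso
    push_neg at hbound
    obtain ⟨s₁, hs₁0, hs₁⟩ := hbound 4 (by norm_num)
    have hs₁pos : 0 < s₁ := by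
      rcases eq_or_lt_of_le hs₁0 with rfl | h
      · rw [hgzero] at hs₁; norm_num at hs₁
      · exact h
    set lam := g s₁ / s₁ with hlamdef
    have hlampos : 0 < lam := div_pos (by linarith) hs₁pos
    have hlams₁ : lam * s₁ = g s₁ := div_mul_cancel₀ _ hs₁pos.ne'
    have hlin : ∀ s, s₁ ≤ s → lam * s ≤ g s := by
      intro s hss
      rcases eq_or_lt_of_le hss with rfl | hlt
      · rw [hlams₁]
      · have hspos : 0 < s := lt_trans hs₁pos hlt
        have hu0 : 0 ≤ s₁ / s := div_nonneg hs₁0 hspos.le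
        have hu1 : s₁ / s ≤ 1 := (div_le_one hspos).2 hss
        have h := hgconv 0 s le_rfl hspos.le (s₁ / s) hu0 hu1
        rw [hgzero] at h
        rw [show (0:ℝ) + s₁ / s * (s - 0) = s₁ by field_simp; ring] at h
        have h2 : g s₁ * s ≤ g s * s₁ := by
          have := mul_le_mul_of_nonneg_left h hspos.le
          rw [mul_add, mul_zero] at this
          calc g s₁ * s = s * g s₁ := by ring
            _ ≤ s * (s₁ / s * g s) := by linarith [this]
            _ = g s * s₁ := by field_simp
        rw [hlamdef, div_mul_eq_mul_div, div_le_iff₀ hs₁pos]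
        linarith
    -- the iterated sequence
    set u : ℕ → ℝ := fun i => Nat.rec s₁ (fun _ ui => ui + (g ui - 1)) i with hudef
    have hu0 : u 0 = s₁ := rfl
    have husucc : ∀ i, u (i + 1) = u i + (g (u i) - 1) := fun i => rfl
    have hA : ∀ i : ℕ, s₁ + 3 * i ≤ u i := by
      intro i
      induction i with
      | zero => simp [hu0]
      | succ i ih =>
        have hui : s₁ ≤ u i := by
          have : (0:ℝ) ≤ 3 * i := by positivity
          linarith
        have hg4 : 4 ≤ g (u i) := by
          have h1 := hlin (u i) hui
          have h2 := mul_le_mul_of_nonneg_left hui hlampos.le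
          linarith [hlams₁]
        rw [husucc]
        push_cast
        linarith
    have huge : ∀ i : ℕ, s₁ ≤ u i ∧ 4 ≤ g (u i) := by
      intro i
      have h1 := hA i
      have hui : s₁ ≤ u i := by
        have : (0:ℝ) ≤ 3 * i := by positivity
        linarith
      refine ⟨hui, ?_⟩
      have := hlin (u i) hui
      nlinarith [mul_le_mul_of_nonneg_left hui hlampos.le]
    have hB : ∀ i : ℕ, p (u i) ≤ p s₁ + n * i := by
      intro i
      induction i with
      | zero => simp [hu0]
      | succ i ih =>
        have h := hchain (u i) (le_trans hs₁0 (huge i).1) (by linarith [(huge i).2])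
        rw [← husucc] at h
        push_cast
        linarith
    have hC : ∀ i : ℕ, s₁ + 3 * lam * ((i:ℝ) * ((i:ℝ) - 1)) / 2 ≤ u i := by
      intro i
      induction i with
      | zero => simp [hu0]
      | succ i ih =>
        have h1 := hA i
        have h2 := hlin (u i) (huge i).1
        have hstep : lam * (s₁ + 3 * i) - 1 ≤ g (u i) - 1 := by
          nlinarith [mul_le_mul_of_nonneg_left h1 hlampos.le]
        have h3 : 3 * lam * i ≤ g (u i) - 1 := by nlinarith [hlams₁]
        rw [husucc]
        push_cast
        nlinarith
    -- conclusion: contradiction for large i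
    have hPpos : 0 < p s₁ + n + 1 := by linarith [hp0 s₁]
    set P := p s₁ + n + 1 with hPdef
    obtain ⟨m, hm⟩ := exists_nat_ge ((n + P) / lam ^ 2)
    set i := m + 2 with hidef
    have hi2 : (2:ℝ) ≤ (i:ℝ) := by
      rw [hidef]; push_cast; linarith [Nat.cast_nonneg (α := ℝ) m]
    have hni : n + P ≤ lam ^ 2 * ((i:ℝ) - 1) := by
      rw [div_le_iff₀ (by positivity)] at hm
      have hmi : (m:ℝ) ≤ (i:ℝ) - 1 := by rw [hidef]; push_cast; linarith
      nlinarith [sq_nonneg lam]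
    have hgi := hgp (u i) (le_trans hs₁0 (huge i).1) (by linarith [(huge i).2])
    have hBi := hB i
    have hCi := hC i
    have hgli := hlin (u i) (huge i).1
    have hint1 := mul_le_mul_of_nonneg_left hCi hlampos.le
    have hint2 := mul_le_mul_of_nonneg_left hni (by linarith : (0:ℝ) ≤ (i:ℝ))
    have hint3 := mul_le_mul_of_nonneg_left hi2 hPpos.le
    have hint4 : 0 ≤ n * (i:ℝ) := mul_nonneg hn (by linarith)
    clear_value P i lam u g
    linarith only [hPdef, hlams₁, hs₁, hint1, hint2, hint3, hint4, hgi, hBi, hgli, hPpos]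

end lemmaB

section mainAux

/-- The clamp function is 1-Lipschitz. -/
lemma clamp_lipschitz (D a b : ℝ) :
    |max 0 (min a D) - max 0 (min b D)| ≤ |a - b| := by
  have hmin : |min a D - min b D| ≤ |a - b| := by
    rw [abs_sub_le_iff]
    constructor
    · rcases le_total b D with h | h
      · rw [min_eq_left h]
        calc min a D - b ≤ a - b := by
              have := min_le_left a D; linarith
          _ ≤ |a - b| := le_abs_self _
      · rw [min_eq_right h]
        have := min_le_right a D
        have := abs_nonneg (a - b)
        linarith
    · rcases le_total a D with h | h
      · rw [min_eq_left h]
        calc min b D - a ≤ b - a := by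
              have := min_le_left b D; linarith
          _ ≤ |a - b| := by rw [abs_sub_comm]; exact le_abs_self _
      · rw [min_eq_right h]
        have := min_le_right b D
        have := abs_nonneg (a - b)
        linarith
  calc |max 0 (min a D) - max 0 (min b D)| ≤ |min a D - min b D| := by
        rw [max_comm 0 (min a D), max_comm 0 (min b D)]
        exact abs_max_sub_max_le_abs _ _ _
    _ ≤ |a - b| := hmin

end mainAux

/-- convergence of horospheres. If `h(x_k) → -∞` for a horofunction `h`
associated to a ray `c` with the bounded geodesic image property, then the geodesics
`[o, x_k]` converge to `c` uniformly on compact sets, i.e. `x_k → c(∞)` in the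
visual topology. -/
theorem horospheres_converge
    {X : Type*} [MetricSpace X] [ProperSpace X] [CompleteSpace X]
    (hX : CAT0Space X) (o : X)
    (c : ℝ → X) (hc : IsGeodesicRay c) (hco : c 0 = o)
    (proj : X → X) (hproj : IsProjOnto proj (rayImage c))
    (hbgi : BGIP c proj)
    (K : ℝ) (h : X → ℝ) (hh : ∀ x, h x = busemann c x + K)
    (x : ℕ → X) (hx : Tendsto (fun k => h (x k)) atTop atBot)
    (γ : ℕ → ℝ → X)
    (hγ0 : ∀ k, γ k 0 = o)
    (hγ1 : ∀ k, γ k (dist o (x k)) = x k)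
    (hγ : ∀ k, ∀ s ∈ Set.Icc (0:ℝ) (dist o (x k)), ∀ t ∈ Set.Icc (0:ℝ) (dist o (x k)),
        dist (γ k s) (γ k t) = |s - t|) :
    ∀ ε : ℝ, 0 < ε → ∀ T : ℝ, ∃ N : ℕ, ∀ k : ℕ, N ≤ k →
      ∀ t ∈ Set.Icc (0:ℝ) T, t ≤ dist o (x k) → dist (γ k t) (c t) ≤ ε := by
  classical
  intro ε hε T
  by_contra hcon
  push_neg at hcon
  choose k hk t ht htd hgt using hcon
  -- Busemann values of the sequence tend to -∞
  have hbx : Tendsto (fun N => busemann c (x N)) atTop atBot := by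
    have h1 : Tendsto (fun N => h (x N) + (-K)) atTop atBot :=
      tendsto_atBot_add_const_right atTop (-K) hx
    refine h1.congr fun N => ?_
    rw [hh]; ring
  -- distances to the sequence tend to ∞
  have hdist : Tendsto (fun N => dist o (x N)) atTop atTop := by
    have hlb : ∀ N, -(busemann c (x N)) ≤ dist o (x N) := by
      intro N
      have := neg_dist_le_busemann hc (x N)
      rw [hco, dist_comm] at this
      linarith
    have h2 : Tendsto (fun N => -(busemann c (x N))) atTop atTop :=
      tendsto_neg_atBot_atTop.comp hbx
    exact tendsto_atTop_mono hlb h2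
  have hktend : Tendsto k atTop atTop := tendsto_atTop_mono hk tendsto_id
  -- first subsequence: make the exceptional times converge
  have hT0 : (0:ℝ) ≤ T := le_trans (ht 0).1 (ht 0).2
  obtain ⟨t₀, ht₀, φ₁, hφ₁mono, hφ₁tend⟩ :=
    (isCompact_Icc (a := (0:ℝ)) (b := T)).tendsto_subseq ht
  -- second subsequence: Arzelà–Ascoli via pointwise compactness on rationals
  set F : ℕ → ℚ → X := fun j q =>
    γ (k (φ₁ j)) (max 0 (min (q : ℝ) (dist o (x (k (φ₁ j)))))) with hFdef
  have hFmem : ∀ j, F j ∈ Set.univ.pi (fun q : ℚ => Metric.closedBall o |(q : ℝ)|) := by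
    intro j q _
    have hD : (0:ℝ) ≤ dist o (x (k (φ₁ j))) := dist_nonneg
    set w := max 0 (min (q : ℝ) (dist o (x (k (φ₁ j))))) with hwdef
    have hw0 : 0 ≤ w := le_max_left _ _
    have hwD : w ≤ dist o (x (k (φ₁ j))) :=
      max_le hD (min_le_right _ _)
    have hwq : w ≤ |(q : ℝ)| :=
      max_le (abs_nonneg _) (le_trans (min_le_left _ _) (le_abs_self _))
    rw [Metric.mem_closedBall, dist_comm]
    have hdd := hγ (k (φ₁ j)) 0 ⟨le_rfl, hD⟩ w ⟨hw0, hwD⟩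
    rw [hγ0] at hdd
    rw [hFdef]
    simp only
    rw [← hwdef, hdd, zero_sub, abs_neg, abs_of_nonneg hw0]
    exact hwq
  obtain ⟨f, _, φ₂, hφ₂mono, hφ₂tend⟩ :=
    (isCompact_univ_pi fun q : ℚ => isCompact_closedBall o |(q : ℝ)|).tendsto_subseq hFmem
  have hptwise : ∀ q : ℚ, Tendsto (fun j => F (φ₂ j) q) atTop (𝓝 (f q)) := by
    intro q
    exact tendsto_pi_nhds.mp hφ₂tend q
  -- the composite index
  set ψ : ℕ → ℕ := fun j => φ₁ (φ₂ j) with hψdef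
  have hψtend : Tendsto ψ atTop atTop := (hφ₁mono.comp hφ₂mono).tendsto_atTop
  set m : ℕ → ℕ := fun j => k (ψ j) with hmdef
  have hmtend : Tendsto m atTop atTop := hktend.comp hψtend
  set Dm : ℕ → ℝ := fun j => dist o (x (m j)) with hDmdef
  have hDmnn : ∀ j, 0 ≤ Dm j := fun j => dist_nonneg
  have hDmtend : Tendsto Dm atTop atTop := hdist.comp hmtend
  set G : ℕ → ℝ → X := fun j s => γ (m j) (max 0 (min s (Dm j))) with hGdef
  have hFG : ∀ (j : ℕ) (q : ℚ), F (φ₂ j) q = G j (q : ℝ) := fun _ _ => rfl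
  have hclamp : ∀ (j : ℕ) (s : ℝ),
      max 0 (min s (Dm j)) ∈ Set.Icc 0 (Dm j) :=
    fun j s => ⟨le_max_left _ _, max_le (hDmnn j) (min_le_right _ _)⟩
  have hGdist : ∀ (j : ℕ) (s s' : ℝ),
      dist (G j s) (G j s') = |max 0 (min s (Dm j)) - max 0 (min s' (Dm j))| :=
    fun j s s' => hγ (m j) _ (hclamp j s) _ (hclamp j s')
  have hGlip : ∀ (j : ℕ) (s s' : ℝ), dist (G j s) (G j s') ≤ |s - s'| := by
    intro j s s'
    rw [hGdist j s s']
    exact clamp_lipschitz _ _ _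
  have hGeq : ∀ (j : ℕ) (s : ℝ), 0 ≤ s → s ≤ Dm j → G j s = γ (m j) s := by
    intro j s h0 hD
    rw [hGdef]
    simp only
    rw [min_eq_left hD, max_eq_right h0]
  -- pointwise limits exist everywhere (completeness)
  have hcauchy : ∀ s : ℝ, ∃ y, Tendsto (fun j => G j s) atTop (𝓝 y) := by
    intro s
    apply cauchySeq_tendsto_of_complete
    rw [Metric.cauchySeq_iff]
    intro δ hδ
    obtain ⟨q, hq⟩ := exists_rat_near s (show (0:ℝ) < δ/4 by linarith)
    have hc2 : CauchySeq fun j => F (φ₂ j) q := (hptwise q).cauchySeq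
    rw [Metric.cauchySeq_iff] at hc2
    obtain ⟨N, hN⟩ := hc2 (δ/4) (by linarith)
    refine ⟨N, fun a ha b hb => ?_⟩
    have h1 : dist (G a s) (G a (q:ℝ)) ≤ |s - (q:ℝ)| := hGlip a s q
    have h2 : dist (G b (q:ℝ)) (G b s) ≤ |(q:ℝ) - s| := hGlip b q s
    have h3 : dist (G a (q:ℝ)) (G b (q:ℝ)) < δ/4 := by
      rw [← hFG a q, ← hFG b q]
      exact hN a ha b hb
    have h4 : |(q:ℝ) - s| < δ/4 := by rw [abs_sub_comm]; exact hq
    calc dist (G a s) (G b s)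
        ≤ dist (G a s) (G a (q:ℝ)) + dist (G a (q:ℝ)) (G b (q:ℝ)) + dist (G b (q:ℝ)) (G b s) :=
          dist_triangle4 _ _ _ _
      _ < δ/4 + δ/4 + δ/4 := by
          refine add_lt_add_of_lt_of_le (add_lt_add_of_le_of_lt ?_ h3) ?_
          · exact (lt_of_le_of_lt h1 hq).le
          · exact le_of_lt (lt_of_le_of_lt h2 h4)
      _ < δ := by linarith
  choose c' hc'lim using hcauchy
  -- c' is a geodesic ray from o
  have hc'o : c' 0 = o := by
    have h1 : (fun j => G j 0) = fun _ => o := by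
      funext j
      rw [hGeq j 0 le_rfl (hDmnn j)]
      exact hγ0 (m j)
    have h2 := hc'lim 0
    rw [h1] at h2
    exact tendsto_nhds_unique h2 tendsto_const_nhds
  have hc'ray : IsGeodesicRay c' := by
    intro s u hs hu
    have h1 : Tendsto (fun j => dist (G j s) (G j u)) atTop (𝓝 (dist (c' s) (c' u))) :=
      (hc'lim s).dist (hc'lim u)
    have h2 : (fun j => dist (G j s) (G j u)) =ᶠ[atTop] fun _ => |s - u| := by
      filter_upwards [hDmtend.eventually_ge_atTop (max s u)] with j hj
      rw [hGeq j s hs (le_trans (le_max_left _ _) hj),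
        hGeq j u hu (le_trans (le_max_right _ _) hj)]
      exact hγ (m j) s ⟨hs, le_trans (le_max_left _ _) hj⟩ u ⟨hu, le_trans (le_max_right _ _) hj⟩
    exact tendsto_nhds_unique h1 ((tendsto_congr' h2).mpr tendsto_const_nhds)
  -- the Busemann function is nonpositive along c'
  have hbuse' : ∀ s : ℝ, 0 ≤ s → busemann c (c' s) ≤ 0 := by
    intro s hs
    refine le_of_forall_pos_le_add fun η hη => ?_
    have hev1 : ∀ᶠ j in atTop, dist (G j s) (c' s) < η := by
      have := (hc'lim s)
      rw [Metric.tendsto_atTop] at this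
      obtain ⟨N, hN⟩ := this η hη
      exact eventually_atTop.mpr ⟨N, fun j hj => hN j hj⟩
    have hev2 : ∀ᶠ j in atTop, busemann c (x (m j)) ≤ 0 :=
      hmtend.eventually (hbx.eventually (eventually_le_atBot 0))
    have hev3 : ∀ᶠ j in atTop, max s 1 ≤ Dm j := hDmtend.eventually_ge_atTop _
    obtain ⟨j, h1, h2, h3⟩ := (hev1.and (hev2.and hev3)).exists
    have hDpos : 0 < Dm j := lt_of_lt_of_le zero_lt_one (le_trans (le_max_right _ _) h3)
    have hsD : s ≤ Dm j := le_trans (le_max_left _ _) h3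
    -- the geodesic from o to x (m j), normalized
    have hseg : IsGeodesicSegment (fun u => γ (m j) (u * Dm j)) o (x (m j)) := by
      refine ⟨by simp only [zero_mul]; exact hγ0 (m j),
        by simp only [one_mul]; exact hγ1 (m j), ?_⟩
      intro a ha b hb
      have ha' : a * Dm j ∈ Set.Icc 0 (Dm j) :=
        ⟨mul_nonneg ha.1 hDpos.le, by nlinarith [ha.2]⟩
      have hb' : b * Dm j ∈ Set.Icc 0 (Dm j) :=
        ⟨mul_nonneg hb.1 hDpos.le, by nlinarith [hb.2]⟩
      rw [hγ (m j) _ ha' _ hb']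
      rw [show a * Dm j - b * Dm j = (a - b) * Dm j by ring, abs_mul,
        abs_of_nonneg (hDmnn j)]
    have hbconv := busemann_convex hX hc hseg
      (u := s / Dm j) ⟨div_nonneg hs hDpos.le, (div_le_one hDpos).2 hsD⟩
    rw [div_mul_cancel₀ _ hDpos.ne'] at hbconv
    have hbo : busemann c o = 0 := by rw [← hco]; exact busemann_zero hc
    rw [hbo, mul_zero] at hbconv
    have hb2 : busemann c (γ (m j) s) ≤ 0 := by
      have : s / Dm j * busemann c (x (m j)) ≤ 0 :=
        mul_nonpos_of_nonneg_of_nonpos (div_nonneg hs hDpos.le) h2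
      linarith
    have hb3 : busemann c (c' s) ≤ busemann c (γ (m j) s) + dist (c' s) (γ (m j) s) :=
      busemann_le_add hc _ _
    have hdist1 : dist (c' s) (γ (m j) s) < η := by
      rw [← hGeq j s hs hsD, dist_comm]
      exact h1
    linarith
  -- apply the rigidity lemma
  obtain ⟨n, hn, hball⟩ := hbgi c' hc'ray (by rw [hc'o, hco])
  have hcc : ∀ s : ℝ, 0 ≤ s → c' s = c s :=
    rayEq_of_busemann_nonpos hX hc hco hproj hc'ray hc'o hn hball hbuse'
  -- derive the contradiction
  have htψ : Tendsto (fun j => t (ψ j)) atTop (𝓝 t₀) := hφ₁tend.comp hφ₂mono.tendsto_atTop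
  have ht₀0 : 0 ≤ t₀ := ht₀.1
  have habs : Tendsto (fun j => |t (ψ j) - t₀|) atTop (𝓝 0) := by
    have h1 : Tendsto (fun j => t (ψ j) - t₀) atTop (𝓝 0) := by
      simpa using htψ.sub_const t₀
    simpa using h1.abs
  have tendsto1 : Tendsto (fun j => G j (t (ψ j))) atTop (𝓝 (c' t₀)) := by
    rw [tendsto_iff_dist_tendsto_zero]
    have hb : ∀ j, dist (G j (t (ψ j))) (c' t₀) ≤ |t (ψ j) - t₀| + dist (G j t₀) (c' t₀) := by
      intro j
      calc dist (G j (t (ψ j))) (c' t₀)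
          ≤ dist (G j (t (ψ j))) (G j t₀) + dist (G j t₀) (c' t₀) := dist_triangle _ _ _
        _ ≤ |t (ψ j) - t₀| + dist (G j t₀) (c' t₀) := by
            have := hGlip j (t (ψ j)) t₀; linarith
    have hz : Tendsto (fun j => |t (ψ j) - t₀| + dist (G j t₀) (c' t₀)) atTop (𝓝 0) := by
      have h2 : Tendsto (fun j => dist (G j t₀) (c' t₀)) atTop (𝓝 0) :=
        tendsto_iff_dist_tendsto_zero.mp (hc'lim t₀)
      simpa using habs.add h2
    exact squeeze_zero (fun j => dist_nonneg) hb hz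
  have tendsto2 : Tendsto (fun j => c (t (ψ j))) atTop (𝓝 (c t₀)) := by
    rw [tendsto_iff_dist_tendsto_zero]
    have heq : ∀ j, dist (c (t (ψ j))) (c t₀) = |t (ψ j) - t₀| := by
      intro j
      exact hc _ _ (ht (ψ j)).1 ht₀0
    rw [show (fun j => dist (c (t (ψ j))) (c t₀)) = fun j => |t (ψ j) - t₀| from funext heq]
    exact habs
  have hlim : Tendsto (fun j => dist (γ (m j) (t (ψ j))) (c (t (ψ j)))) atTop
      (𝓝 (dist (c' t₀) (c t₀))) := by
    have h1 := tendsto1.dist tendsto2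
    refine h1.congr fun j => ?_
    rw [hGeq j (t (ψ j)) (ht (ψ j)).1 (htd (ψ j))]
  have hzero : dist (c' t₀) (c t₀) = 0 := by
    rw [hcc t₀ ht₀0, dist_self]
  rw [hzero] at hlim
  have hge : ε ≤ 0 := ge_of_tendsto hlim (Eventually.of_forall fun j => (hgt (ψ j)).le)
  linarith
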